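/- arXiv:2403.04597 — 5 statements merged into one kernel-verified Lean document; each statement's English description precedes it below -/
import Mathlib

section
/- If W is a quotient representation of an F1-representation V (the quotient by a subrepresentation U, with underlying pointed sets (V_i \ U_i) ∪ {0}), then Γ_W is a predecessor closed full subquiver of Γ_V: for every arrow a of Γ_V, if t(a) lies in Γ_W then s(a) lies in Γ_W. -/
theorem Option.prop_of_map_subtype_val_eq_some {α : Type*} {p : α → Prop}
    {o : Option (Subtype p)} {w : α} (h : o.map Subtype.val = some w) : p w := by
  obtain ⟨u, -, rfl⟩ := Option.map_eq_some_iff.mp h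
  exact u.2

/-- `Γ_U` is successor closed in `Γ_V`; the theorem is the contrapositive for `Γ_{V/U}`. -/
theorem mem_of_map_eq_some_of_mem {ι A : Type} {s t : A → ι} {B : ι → Type}
    {Vmap : ∀ a : A, B (s a) → Option (B (t a))} {S : ∀ i, Set (B i)}
    {Umap : ∀ a : A, {v : B (s a) // v ∈ S (s a)} → Option {w : B (t a) // w ∈ S (t a)}}
    (Ucompat : ∀ (a : A) (v : B (s a)) (h : v ∈ S (s a)),
      Option.map Subtype.val (Umap a ⟨v, h⟩) = Vmap a v)
    {a : A} {v : B (s a)} {w : B (t a)} (hv : v ∈ S (s a)) (hvw : Vmap a v = some w) :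
    w ∈ S (t a) :=
  Option.prop_of_map_subtype_val_eq_some ((Ucompat a v hv).trans hvw)

theorem quotient_coeff_quiver_predecessor_closed_general
    (ι : Type) (A : Type) (s t : A → ι)
    (B : ι → Type)
    (Vmap : ∀ a : A, B (s a) → Option (B (t a)))
    -- the subrepresentation `U`
    (S : ∀ i, Set (B i))
    (Umap : ∀ a : A, {v : B (s a) // v ∈ S (s a)} → Option {w : B (t a) // w ∈ S (t a)})
    (Ucompat : ∀ (a : A) (v : B (s a)) (h : v ∈ S (s a)),
      Option.map Subtype.val (Umap a ⟨v, h⟩) = Vmap a v) :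
    ∀ (a : A) (v : B (s a)) (w : B (t a)),
      Vmap a v = some w → w ∉ S (t a) → v ∉ S (s a) :=
  fun _ _ _ hvw hw hv => hw (mem_of_map_eq_some_of_mem Ucompat hv hvw)

/-- Let `Q` be a quiver with vertex set `ι`, arrow set `A` and source/target
maps `s, t`, and let `V` be an `F1`-representation of `Q`, encoded by the
families `B i` of nonzero elements of the pointed sets `V_i` together with
structure maps `Vmap a : B (s a) → Option (B (t a))` (`none` standing for the
zero element), injective away from `none`.

Let `U ⊆ V` be a subrepresentation, encoded by subsets `S i ⊆ B i` with
structure maps `Umap` restricting those of `V`, and let `W = V/U` be the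
quotient representation, whose nonzero elements at vertex `i` are `B i \ S i`.

Theorem: the coefficient quiver `Γ_W` is a predecessor closed (full) subquiver
of `Γ_V`: for every arrow `v → w` of `Γ_V` (i.e. `Vmap a v = some w`), if the
target `w` lies in `Γ_W` (i.e. `w ∉ S (t a)`) then the source `v` lies in
`Γ_W` (i.e. `v ∉ S (s a)`). -/
theorem quotient_coeff_quiver_predecessor_closed
    (ι : Type) [Finite ι] (A : Type) [Finite A] (s t : A → ι)
    (B : ι → Type) [∀ i, Finite (B i)]
    (Vmap : ∀ a : A, B (s a) → Option (B (t a)))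
    (Vinj : ∀ (a : A) (v v' : B (s a)) (w : B (t a)),
      Vmap a v = some w → Vmap a v' = some w → v = v')
    -- the subrepresentation `U`
    (S : ∀ i, Set (B i))
    (Umap : ∀ a : A, {v : B (s a) // v ∈ S (s a)} → Option {w : B (t a) // w ∈ S (t a)})
    (Ucompat : ∀ (a : A) (v : B (s a)) (h : v ∈ S (s a)),
      Option.map Subtype.val (Umap a ⟨v, h⟩) = Vmap a v) :
    ∀ (a : A) (v : B (s a)) (w : B (t a)),
      Vmap a v = some w → w ∉ S (t a) → v ∉ S (s a) :=
  quotient_coeff_quiver_predecessor_closed_general ι A s t B Vmap S Umap Ucompat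
end

section
/- Let V and W be F1-representations of a quiver Q, K a field, and let f be a K-linear morphism of representations from V^K to W^K. If (v,w) and (v',w') are vertices of the tensor product coefficient quiver Γ_V ⊗ Γ_W connected by an arrow, then the matrix coefficients of f satisfy f_{v,w} = f_{v',w'}, where f_{v,w} denotes the coefficient of the basis element w in f(v). -/
open scoped Classical

/-- The structure map of the scalar extension `V^K` along an arrow `a`:
the basis vector `v` is sent to `w` when `Vmap a v = some w`, and to `0` when
`Vmap a v = none`. Here the `F1`-representation is encoded by the families
`B i` of nonzero elements of the `V_i` and by the `Option`-valued structure
maps (`none` standing for zero). -/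
noncomputable def structK {ι A : Type} (s t : A → ι) (B : ι → Type)
    [∀ i, Fintype (B i)] (K : Type) [Field K]
    (Vmap : ∀ a : A, B (s a) → Option (B (t a))) (a : A) :
    (B (s a) → K) →ₗ[K] (B (t a) → K) where
  toFun x w := ∑ v : B (s a), (if Vmap a v = some w then (1 : K) else 0) * x v
  map_add' x y := by
    funext w
    simp [mul_add, Finset.sum_add_distrib]
  map_smul' c x := by
    funext w
    simp [Finset.mul_sum, mul_left_comm]

section structK

variable {ι A : Type} {s t : A → ι} {B : ι → Type} [∀ i, Fintype (B i)] {K : Type} [Field K]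
  {Vmap : ∀ a : A, B (s a) → Option (B (t a))} {a : A}

theorem structK_apply_of_unique_preimage {v : B (s a)} {u : B (t a)} (hv : Vmap a v = some u)
    (huniq : ∀ v', Vmap a v' = some u → v' = v) (x : B (s a) → K) :
    structK s t B K Vmap a x u = x v := by
  simp only [structK, LinearMap.coe_mk, AddHom.coe_mk]
  rw [Finset.sum_eq_single v (fun v' _ hne => by simp [mt (huniq v') hne]) (by simp)]
  simp [hv]

theorem structK_single [DecidableEq (B (s a))] [DecidableEq (B (t a))] {v : B (s a)}
    {v' : B (t a)} (hv : Vmap a v = some v') (c : K) :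
    structK s t B K Vmap a (Pi.single v c) = Pi.single v' c := by
  funext u
  simp only [structK, LinearMap.coe_mk, AddHom.coe_mk]
  rw [Finset.sum_eq_single v (fun v'' _ hne => by simp [hne]) (by simp)]
  rcases eq_or_ne u v' with rfl | hu
  · simp [hv]
  · simp [hv, hu, Ne.symm hu]

end structK

theorem coeff_eq_along_tensor_arrow_general
    (ι : Type) (A : Type) (s t : A → ι)
    (BV BW : ι → Type) [∀ i, Fintype (BV i)] [∀ i, Fintype (BW i)]
    [∀ i, DecidableEq (BV i)]
    (Vmap : ∀ a : A, BV (s a) → Option (BV (t a)))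
    (Wmap : ∀ a : A, BW (s a) → Option (BW (t a)))
    (Winj : ∀ (a : A) (w w' : BW (s a)) (u : BW (t a)),
      Wmap a w = some u → Wmap a w' = some u → w = w')
    (K : Type) [Field K]
    -- a morphism of `K`-representations `f : V^K → W^K`
    (f : ∀ i, (BV i → K) →ₗ[K] (BW i → K))
    (hf : ∀ a : A, (structK s t BW K Wmap a).comp (f (s a)) =
      (f (t a)).comp (structK s t BV K Vmap a))
    -- an arrow `(v,w) → (v',w')` of `Γ_V ⊗ Γ_W`
    (a : A) (v : BV (s a)) (w : BW (s a)) (v' : BV (t a)) (w' : BW (t a))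
    (hv : Vmap a v = some v') (hw : Wmap a w = some w') :
    f (s a) (Pi.single v 1) w = f (t a) (Pi.single v' 1) w' := by
  have h := congrFun (LinearMap.congr_fun (hf a) (Pi.single v 1)) w'
  rwa [LinearMap.comp_apply, LinearMap.comp_apply,
    structK_apply_of_unique_preimage hw (fun w'' hw'' => Winj a w'' w w' hw'' hw),
    structK_single hv] at h

/-- Matrix coefficients of a morphism of `K`-representations are constant
along arrows of the tensor product coefficient quiver `Γ_V ⊗ Γ_W`:
if there is an arrow `(v,w) → (v',w')`, i.e. an arrow `a` of `Q` with
`V_a v = v' ≠ 0` and `W_a w = w' ≠ 0`, then `f_{v,w} = f_{v',w'}`,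
where `f_{v,w}` is the coefficient of `w` in `f v`. -/
theorem coeff_eq_along_tensor_arrow
    (ι : Type) [Fintype ι] (A : Type) [Fintype A] (s t : A → ι)
    (BV BW : ι → Type) [∀ i, Fintype (BV i)] [∀ i, Fintype (BW i)]
    [∀ i, DecidableEq (BV i)] [∀ i, DecidableEq (BW i)]
    (Vmap : ∀ a : A, BV (s a) → Option (BV (t a)))
    (Wmap : ∀ a : A, BW (s a) → Option (BW (t a)))
    (Vinj : ∀ (a : A) (v v' : BV (s a)) (u : BV (t a)),
      Vmap a v = some u → Vmap a v' = some u → v = v')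
    (Winj : ∀ (a : A) (w w' : BW (s a)) (u : BW (t a)),
      Wmap a w = some u → Wmap a w' = some u → w = w')
    (K : Type) [Field K]
    -- a morphism of `K`-representations `f : V^K → W^K`
    (f : ∀ i, (BV i → K) →ₗ[K] (BW i → K))
    (hf : ∀ a : A, (structK s t BW K Wmap a).comp (f (s a)) =
      (f (t a)).comp (structK s t BV K Vmap a))
    -- an arrow `(v,w) → (v',w')` of `Γ_V ⊗ Γ_W`
    (a : A) (v : BV (s a)) (w : BW (s a)) (v' : BV (t a)) (w' : BW (t a))
    (hv : Vmap a v = some v') (hw : Wmap a w = some w') :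
    f (s a) (Pi.single v 1) w = f (t a) (Pi.single v' 1) w' :=
  coeff_eq_along_tensor_arrow_general ι A s t BV BW Vmap Wmap Winj K f hf a v w v' w' hv hw
end

section
/- Let M be the adjacency matrix of a finite connected k-regular directed graph G with at least two vertices (every vertex has outdegree and indegree k, k ≥ 1). Then the characteristic polynomial of M has a simple root, namely k is an eigenvalue of M of algebraic multiplicity one. -/
/-!
Put `A = M` over `ℂ` and `g = A - k`. If `A x = k x` with `x` real, then, row and column sums
being `k`, `∑ M u v (x u - x v)² = 2k ∑ x u² - 2 ⟪x, A x⟫ = 0`; applied to the real and imaginary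
parts of an eigenvector, this makes it constant along edges, hence constant by connectivity:
the eigenspace of `k` is spanned by `𝟙`. Since the
column sums are `k`, the coordinate sum vanishes on the range of `g` but not on `𝟙`, so
`ker g ∩ range g = 0`. Then `ker gⁿ = ker g`, and the algebraic multiplicity of `k`, which is
the dimension of the generalized eigenspace, equals the geometric one, namely `1`.
-/

open Finset Matrix Module

namespace Module.End

variable {K V : Type*} [Field K] [AddCommGroup V] [Module K V]

theorem maxGenEigenspace_eq_eigenspace_of_disjoint {f : End K V} {μ : K}
    (h : Disjoint (f.eigenspace μ) (LinearMap.range (f - μ • 1))) :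
    f.maxGenEigenspace μ = f.eigenspace μ := by
  set g := f - μ • 1
  have ker_pow (n : ℕ) (x : V) (hx : (g ^ n) x = 0) : g x = 0 := by
    induction n generalizing x with
    | zero => simp_all
    | succ n ih =>
      rw [pow_succ, Module.End.mul_apply] at hx
      have hgx : g x ∈ f.eigenspace μ := by
        rw [eigenspace_def]
        exact ih (g x) hx
      exact Submodule.disjoint_def.1 h _ hgx (LinearMap.mem_range_self g x)
  refine le_antisymm (fun x hx => ?_) (genEigenspace_le_maximal f μ 1)
  obtain ⟨n, hn⟩ := (mem_maxGenEigenspace f μ x).1 hx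
  rw [eigenspace_def]
  exact ker_pow n x hn

end Module.End

namespace Matrix

variable {ι : Type*} [Fintype ι]

theorem rootMultiplicity_charpoly_eq_one {K : Type*} [Field K] [DecidableEq ι]
    {A : Matrix ι ι K} {μ : K} {v w : ι → K}
    (hv : End.eigenspace (toLin' A) μ = K ∙ v) (hw : w ᵥ* A = μ • w) (hwv : w ⬝ᵥ v ≠ 0) :
    A.charpoly.rootMultiplicity μ = 1 := by
  have range_le_ker_dotProduct :
      LinearMap.range (toLin' A - μ • 1) ≤ LinearMap.ker (dotProductBilin K K w) := by
    rintro _ ⟨x, rfl⟩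
    simp [dotProduct_sub, dotProduct_mulVec, hw]
  have hdisj :
      Disjoint (End.eigenspace (toLin' A) μ) (LinearMap.range (toLin' A - μ • 1)) := by
    rw [hv, Submodule.disjoint_def]
    rintro _ hx hrange
    obtain ⟨c, rfl⟩ := Submodule.mem_span_singleton.1 hx
    have : c * (w ⬝ᵥ v) = 0 := by simpa using range_le_ker_dotProduct hrange
    simp [(mul_eq_zero.1 this).resolve_right hwv]
  have hv0 : v ≠ 0 := by
    rintro rfl
    simp at hwv
  rw [← charpoly_toLin', ← LinearMap.finrank_maxGenEigenspace_eq,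
    End.maxGenEigenspace_eq_eigenspace_of_disjoint hdisj, hv, finrank_span_singleton hv0]

theorem sum_mul_sub_sq_eq_zero_of_mulVec_eq_smul {M : Matrix ι ι ℝ} {c : ℝ}
    (hrow : ∀ u, ∑ v, M u v = c) (hcol : ∀ v, ∑ u, M u v = c) {x : ι → ℝ}
    (hx : M *ᵥ x = c • x) :
    ∑ u, ∑ v, M u v * (x u - x v) ^ 2 = 0 := by
  have hrow_expand (u : ι) : ∑ v, M u v * (x u - x v) ^ 2 =
      (∑ v, M u v) * x u ^ 2 + ∑ v, M u v * x v ^ 2 - 2 * x u * (M *ᵥ x) u := by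
    simp only [mulVec, dotProduct, sum_mul, mul_sum, ← sum_add_distrib, ← sum_sub_distrib]
    exact sum_congr rfl fun v _ => by ring
  have hcol_sum : ∑ u, ∑ v, M u v * x v ^ 2 = c * ∑ v, x v ^ 2 := by
    rw [sum_comm, mul_sum]
    exact sum_congr rfl fun v _ => by rw [← sum_mul, hcol]
  calc ∑ u, ∑ v, M u v * (x u - x v) ^ 2
      = ∑ u, (c * x u ^ 2 + ∑ v, M u v * x v ^ 2 - 2 * c * x u ^ 2) :=
        sum_congr rfl fun u _ => by
          rw [hrow_expand, hrow, hx, Pi.smul_apply, smul_eq_mul]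
          ring
    _ = 0 := by
      rw [sum_sub_distrib, sum_add_distrib, hcol_sum, ← mul_sum, ← mul_sum]
      ring

theorem apply_eq_of_mulVec_eq_smul {M : Matrix ι ι ℝ} (hM : ∀ u v, 0 ≤ M u v) {c : ℝ}
    (hrow : ∀ u, ∑ v, M u v = c) (hcol : ∀ v, ∑ u, M u v = c) {x : ι → ℝ}
    (hx : M *ᵥ x = c • x) {u v : ι} (huv : M u v ≠ 0) : x u = x v := by
  have hterm_nonneg (u v : ι) : 0 ≤ M u v * (x u - x v) ^ 2 :=
    mul_nonneg (hM u v) (sq_nonneg _)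
  have hzero := sum_mul_sub_sq_eq_zero_of_mulVec_eq_smul hrow hcol hx
  rw [sum_eq_zero_iff_of_nonneg fun u _ => sum_nonneg fun v _ => hterm_nonneg u v] at hzero
  have huv_term := (sum_eq_zero_iff_of_nonneg fun v _ => hterm_nonneg u v).1
    (hzero u (mem_univ u)) v (mem_univ v)
  rw [mul_eq_zero, sq_eq_zero_iff, sub_eq_zero] at huv_term
  exact huv_term.resolve_left huv

theorem comp_map_natCast_mulVec {R S : Type*} [NonAssocSemiring R] [NonAssocSemiring S]
    (L : R →+ S) (M : Matrix ι ι ℕ) (x : ι → R) :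
    L ∘ (M.map (Nat.cast : ℕ → R) *ᵥ x) = M.map (Nat.cast : ℕ → S) *ᵥ (L ∘ x) := by
  funext u
  simp [mulVec, dotProduct, ← nsmul_eq_mul]

theorem ones_vecMul_map_natCast {M : Matrix ι ι ℕ} {k : ℕ} (hin : ∀ v, ∑ u, M u v = k) :
    (fun _ => 1) ᵥ* M.map (Nat.cast : ℕ → ℂ) = (k : ℂ) • fun _ => 1 := by
  funext v
  simp [vecMul, dotProduct, ← Nat.cast_sum, hin]

theorem eigenspace_toLin'_map_natCast_eq_span_ones [DecidableEq ι] [Nonempty ι]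
    {M : Matrix ι ι ℕ} {k : ℕ} (hout : ∀ u, ∑ v, M u v = k) (hin : ∀ v, ∑ u, M u v = k)
    (hconn : ∀ u v, Relation.ReflTransGen (fun x y => M x y ≠ 0 ∨ M y x ≠ 0) u v) :
    End.eigenspace (toLin' (M.map (Nat.cast : ℕ → ℂ))) k = ℂ ∙ fun _ => 1 := by
  have real_const {y : ι → ℝ} (hy : M.map (Nat.cast : ℕ → ℝ) *ᵥ y = (k : ℝ) • y) (u v : ι) :
      y u = y v := by
    have hedge {a b : ι} (hab : M a b ≠ 0) : y a = y b :=
      apply_eq_of_mulVec_eq_smul (fun _ _ => Nat.cast_nonneg _)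
        (fun u => by simpa using congrArg (Nat.cast : ℕ → ℝ) (hout u))
        (fun v => by simpa using congrArg (Nat.cast : ℕ → ℝ) (hin v)) hy
        (by simpa using hab)
    simpa [Relation.reflTransGen_eq_self] using
      (hconn u v).lift y fun a b hab => hab.elim hedge fun h => (hedge h).symm
  refine le_antisymm (fun x hx => ?_) ?_
  · rw [End.mem_eigenspace_iff, toLin'_apply] at hx
    have hpart (L : ℂ →+ ℝ) (u v : ι) : L (x u) = L (x v) := by
      refine real_const (y := L ∘ x) ?_ u v
      rw [← comp_map_natCast_mulVec, hx]
      funext u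
      simp only [Function.comp_apply, Pi.smul_apply, Nat.cast_smul_eq_nsmul, map_nsmul]
    obtain ⟨u₀⟩ := ‹Nonempty ι›
    refine Submodule.mem_span_singleton.2 ⟨x u₀, funext fun v => ?_⟩
    simpa using
      Complex.ext (hpart Complex.reAddGroupHom u₀ v) (hpart Complex.imAddGroupHom u₀ v)
  · rw [Submodule.span_singleton_le_iff_mem, End.mem_eigenspace_iff, toLin'_apply]
    funext u
    simp [mulVec, dotProduct, ← Nat.cast_sum, hout]

end Matrix

theorem perron_frobenius_simple_root_general
    (ι : Type) [Fintype ι] [DecidableEq ι] (hcard : 2 ≤ Fintype.card ι)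
    (M : Matrix ι ι ℕ) (k : ℕ)
    (hout : ∀ u : ι, ∑ v : ι, M u v = k)
    (hin : ∀ v : ι, ∑ u : ι, M u v = k)
    (hconn : ∀ u v : ι,
      Relation.ReflTransGen (fun x y => M x y ≠ 0 ∨ M y x ≠ 0) u v) :
    (Matrix.charpoly (M.map (Nat.cast : ℕ → ℂ))).rootMultiplicity (k : ℂ) = 1 := by
  have : Nonempty ι := Fintype.card_pos_iff.1 (by omega)
  refine rootMultiplicity_charpoly_eq_one
    (eigenspace_toLin'_map_natCast_eq_span_ones hout hin hconn) (ones_vecMul_map_natCast hin) ?_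
  simp [dotProduct]

/-- Perron–Frobenius: let `M` be the adjacency matrix of a finite directed
graph (with parallel edges allowed, `M u v` counting the edges from `u` to
`v`) with at least two vertices, whose underlying undirected graph is
connected and in which every vertex has outdegree and indegree `k ≥ 1`.
Then `k` is a simple root of the characteristic polynomial of `M` (over `ℂ`):
it is an eigenvalue of algebraic multiplicity one. -/
theorem perron_frobenius_simple_root
    (ι : Type) [Fintype ι] [DecidableEq ι] (hcard : 2 ≤ Fintype.card ι)
    (M : Matrix ι ι ℕ) (k : ℕ) (hk : 1 ≤ k)
    (hout : ∀ u : ι, ∑ v : ι, M u v = k)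
    (hin : ∀ v : ι, ∑ u : ι, M u v = k)
    (hconn : ∀ u v : ι,
      Relation.ReflTransGen (fun x y => M x y ≠ 0 ∨ M y x ≠ 0) u v) :
    (Matrix.charpoly (M.map (Nat.cast : ℕ → ℂ))).rootMultiplicity (k : ℂ) = 1 :=
  perron_frobenius_simple_root_general ι hcard M k hout hin hconn
end

section
/- Let V be an indecomposable F1-representation of a quiver Q such that the tensor square coefficient quiver Γ_V ⊗ Γ_V contains a covering component C different from the diagonal component C_id. Then the complexification V^ℂ is a decomposable representation of Q over ℂ. -/
section

/- `Q` is a quiver with vertices `ι`, arrows `A` and source/target maps `s,t`;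
`V` is an `F1`-representation of `Q` encoded by the families `B i` of nonzero
elements and the `Option`-valued structure maps `Vmap` (`none` standing for
the zero element), injective away from `none`. -/
variable {ι A : Type} (s t : A → ι) (B : ι → Type)
  (Vmap : ∀ a : A, B (s a) → Option (B (t a)))

/-- Vertices of the coefficient quiver `Γ_V`. -/
def GVert : Type := Σ i : ι, B i

/-- Undirected adjacency in `Γ_V`. -/
def GAdj (x y : GVert B) : Prop :=
  ∃ (a : A) (v : B (s a)) (w : B (t a)), Vmap a v = some w ∧
    ((x = ⟨s a, v⟩ ∧ y = ⟨t a, w⟩) ∨ (y = ⟨s a, v⟩ ∧ x = ⟨t a, w⟩))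

/-- Vertices of the tensor square coefficient quiver `Γ_V ⊗ Γ_V`. -/
def TVert : Type := Σ i : ι, B i × B i

/-- Undirected adjacency in `Γ_V ⊗ Γ_V`: there is an arrow
`(v,w) → (V_a v, V_a w)` for each arrow `a` of `Q` with both images nonzero. -/
def TAdj (x y : TVert B) : Prop :=
  ∃ (a : A) (v w : B (s a)) (v' w' : B (t a)),
    Vmap a v = some v' ∧ Vmap a w = some w' ∧
    ((x = ⟨s a, (v, w)⟩ ∧ y = ⟨t a, (v', w')⟩) ∨
     (y = ⟨s a, (v, w)⟩ ∧ x = ⟨t a, (v', w')⟩))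

/-- `C` is a connected component of `Γ_V ⊗ Γ_V`. -/
def IsComponent (C : Set (TVert B)) : Prop :=
  C.Nonempty ∧
  (∀ x ∈ C, ∀ y, TAdj s t B Vmap x y → y ∈ C) ∧
  (∀ x ∈ C, ∀ y ∈ C, Relation.ReflTransGen (TAdj s t B Vmap) x y)

/-- The first projection `π₁ : C → Γ_V` is a covering: for every vertex
`(v,w)` of `C` it restricts to a bijection between the arrows of `C` starting
(resp. ending) at `(v,w)` and the arrows of `Γ_V` starting (resp. ending) at
`v`.  Since arrows of `Γ_V ⊗ Γ_V` are determined by one endpoint and their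
label, this amounts to the unique existence of lifts. -/
def Proj1Covering (C : Set (TVert B)) : Prop :=
  (∀ (a : A) (v w : B (s a)) (v' : B (t a)),
    (⟨s a, (v, w)⟩ : TVert B) ∈ C → Vmap a v = some v' →
      ∃! w' : B (t a), Vmap a w = some w') ∧
  (∀ (a : A) (v' w' : B (t a)) (v : B (s a)),
    (⟨t a, (v', w')⟩ : TVert B) ∈ C → Vmap a v = some v' →
      ∃! w : B (s a), Vmap a w = some w')

/-- The second projection `π₂ : C → Γ_V` is a covering. -/
def Proj2Covering (C : Set (TVert B)) : Prop :=
  (∀ (a : A) (v w : B (s a)) (w' : B (t a)),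
    (⟨s a, (v, w)⟩ : TVert B) ∈ C → Vmap a w = some w' →
      ∃! v' : B (t a), Vmap a v = some v') ∧
  (∀ (a : A) (v' w' : B (t a)) (w : B (s a)),
    (⟨t a, (v', w')⟩ : TVert B) ∈ C → Vmap a w = some w' →
      ∃! v : B (s a), Vmap a v = some v')


variable [∀ i, Fintype (B i)]

open scoped Classical in
/-- The structure map of the complexification `V^ℂ` along an arrow `a`. -/
noncomputable def structC (a : A) : (B (s a) → ℂ) →ₗ[ℂ] (B (t a) → ℂ) where
  toFun x w := ∑ v : B (s a), (if Vmap a v = some w then (1 : ℂ) else 0) * x v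
  map_add' x y := by funext w; simp [mul_add, Finset.sum_add_distrib]
  map_smul' c x := by funext w; simp [Finset.mul_sum, mul_left_comm]

end

/-!
Read the component `C` at a vertex `i` as a 0/1 matrix `b` on `B i`. Because both projections
of `C` are coverings, the `b`'s intertwine the structure maps of `V^ℂ`; since the first one is
and `Γ_V` is connected, every row of every `b` has the same number `d` of ones. So the Fitting
decomposition of `b - d` (the generalized `d`-eigenspace of `b` and the sum of its other
generalized eigenspaces) splits `V^ℂ` into two subrepresentations. The first contains the
constant vector. If the second vanished, `b - d` would be nilpotent and `trace b = d · |B i|`;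
but `trace b` counts the diagonal pairs in `C`, and an off-diagonal pair `(v, w) ∈ C` forces
this count below `d · |B i|`. This trace count replaces the Perron–Frobenius argument.
-/

open Finset

namespace LinearMap

variable {R M N : Type*} [Semiring R] [AddCommMonoid M] [Module R M] [AddCommMonoid N] [Module R N]
  {g : Module.End R M} {g' : Module.End R N} {f : M →ₗ[R] N}

theorem iSup_ker_pow_le_comap_of_comp_eq (h : g'.comp f = f.comp g) :
    ⨆ n, ker (g ^ n) ≤ (⨆ n, ker (g' ^ n)).comap f :=
  iSup_le fun n x hx => Submodule.mem_iSup_of_mem n <| by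
    rw [mem_ker, ← comp_apply, Module.End.commute_pow_left_of_commute h, comp_apply,
      mem_ker.mp hx, map_zero]

theorem iInf_range_pow_le_comap_of_comp_eq (h : g'.comp f = f.comp g) :
    ⨅ n, range (g ^ n) ≤ (⨅ n, range (g' ^ n)).comap f := by
  intro x hx
  refine Submodule.mem_iInf _ |>.mpr fun n => ?_
  obtain ⟨y, rfl⟩ := (Submodule.mem_iInf _).mp hx n
  exact ⟨f y, by rw [← comp_apply, Module.End.commute_pow_left_of_commute h, comp_apply]⟩

theorem isNilpotent_of_iInf_range_pow_eq_bot [IsArtinian R M]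
    (h : ⨅ n, range (g ^ n) = ⊥) : IsNilpotent g := by
  obtain ⟨n, hn⟩ := (eventually_iInf_range_pow_eq g).exists
  exact ⟨n, range_eq_bot.mp (hn ▸ h)⟩

end LinearMap

theorem Finset.card_eq_card_of_card_le_one {α β : Type*} {s : Finset α} {t : Finset β}
    (hs : #s ≤ 1) (ht : #t ≤ 1) (h : s.Nonempty ↔ t.Nonempty) : #s = #t := by
  rw [← card_pos, ← card_pos] at h
  omega

theorem card_filter_refl_lt_of_regular {α : Type*} [Fintype α] {r : α → α → Prop}
    [DecidableRel r] {d : ℕ} (hd : ∀ v, #{w | r v w} = d) {v₀ w₀ : α} (h : r v₀ w₀)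
    (hne : v₀ ≠ w₀) : #{v | r v v} < Fintype.card α * d := by
  calc #{v | r v v} = ∑ v, if r v v then 1 else 0 := by rw [sum_boole, Nat.cast_id]
    _ < ∑ v, #{w | r v w} := by
      refine sum_lt_sum (fun v _ => ?_) ⟨v₀, mem_univ _, ?_⟩
      · split_ifs with hv
        · exact card_pos.mpr ⟨v, by simpa using hv⟩
        · exact Nat.zero_le _
      · split_ifs with hv
        · exact one_lt_card.mpr ⟨v₀, by simpa using hv, w₀, by simpa using h, hne⟩
        · exact card_pos.mpr ⟨w₀, by simpa using h⟩
    _ = Fintype.card α * d := by simp [hd]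

open scoped Classical

namespace Matrix

noncomputable def ofRel (R : Type*) [Zero R] [One R] {α β : Type*} (r : α → β → Prop) :
    Matrix α β R :=
  of fun x y => if r x y then 1 else 0

variable {R : Type*} [Semiring R] {α β γ : Type*}

theorem ofRel_mul_ofRel_apply [Fintype β] (r : α → β → Prop) (q : β → γ → Prop)
    (x : α) (z : γ) :
    (ofRel R r * ofRel R q) x z = #{y | r x y ∧ q y z} := by
  simp only [ofRel, mul_apply, of_apply, ite_zero_mul_ite_zero, one_mul, sum_boole]

theorem trace_ofRel [Fintype α] (r : α → α → Prop) : (ofRel R r).trace = #{x | r x x} := by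
  simp only [ofRel, trace, diag_apply, of_apply, sum_boole]

theorem ofRel_mulVec_one [Fintype β] (r : α → β → Prop) (x : α) :
    (ofRel R r *ᵥ 1) x = #{y | r x y} := by
  simp only [ofRel, mulVec, dotProduct, of_apply, Pi.one_apply, mul_one, sum_boole]

end Matrix

section RegularRelation

variable {α : Type*} [Fintype α] {r : α → α → Prop} {d : ℕ}

theorem one_mem_ker_toLin'_ofRel_sub {R : Type*} [CommRing R] (hd : ∀ x, #{y | r x y} = d) :
    (1 : α → R) ∈ LinearMap.ker ((Matrix.ofRel R r).toLin' - (d : R) • 1) := by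
  ext x
  simp [Matrix.ofRel_mulVec_one, hd]

theorem iInf_range_pow_toLin'_ofRel_sub_ne_bot {K : Type*} [Field K] [CharZero K]
    (hd : ∀ x, #{y | r x y} = d) {x₀ y₀ : α} (h : r x₀ y₀) (hne : x₀ ≠ y₀) :
    ⨅ n, LinearMap.range (((Matrix.ofRel K r).toLin' - (d : K) • 1) ^ n) ≠ ⊥ := by
  intro hbot
  have htr := (LinearMap.isNilpotent_trace_of_isNilpotent
    (LinearMap.isNilpotent_of_iInf_range_pow_eq_bot hbot)).eq_zero
  rw [map_sub, map_smul, Matrix.trace_toLin'_eq, Matrix.trace_ofRel, LinearMap.trace_one,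
    Module.finrank_fintype_fun_eq_card, smul_eq_mul, sub_eq_zero, mul_comm] at htr
  exact (card_filter_refl_lt_of_regular hd h hne).ne (by exact_mod_cast htr)

end RegularRelation

section CoveringComponent

variable {ι A : Type} {s t : A → ι} {B : ι → Type}
  {Vmap : ∀ a : A, B (s a) → Option (B (t a))} {C : Set (TVert B)}

theorem reflTransGen_tAdj_diag_of_gAdj {x y : GVert B}
    (h : Relation.ReflTransGen (GAdj s t B Vmap) x y) :
    Relation.ReflTransGen (TAdj s t B Vmap) ⟨x.1, (x.2, x.2)⟩ ⟨y.1, (y.2, y.2)⟩ := by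
  refine h.lift (fun x : GVert B => (⟨x.1, (x.2, x.2)⟩ : TVert B)) ?_
  rintro _ _ ⟨a, v, w, hvw, ⟨rfl, rfl⟩ | ⟨rfl, rfl⟩⟩
  · exact ⟨a, v, v, w, w, hvw, hvw, Or.inl ⟨rfl, rfl⟩⟩
  · exact ⟨a, v, v, w, w, hvw, hvw, Or.inr ⟨rfl, rfl⟩⟩

theorem IsComponent.mem_of_reflTransGen (hC : IsComponent s t B Vmap C) {x y : TVert B}
    (hx : x ∈ C) (h : Relation.ReflTransGen (TAdj s t B Vmap) x y) : y ∈ C := by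
  induction h with
  | refl => exact hx
  | tail _ hyz ih => exact hC.2.1 _ ih _ hyz

theorem IsComponent.exists_ne_mem (hC : IsComponent s t B Vmap C)
    (hconn : ∀ x y : GVert B, Relation.ReflTransGen (GAdj s t B Vmap) x y)
    (hne : C ≠ {x : TVert B | x.2.1 = x.2.2}) :
    ∃ (i : ι) (v w : B i), v ≠ w ∧ (⟨i, (v, w)⟩ : TVert B) ∈ C := by
  by_contra! hdiag
  refine hne (Set.Subset.antisymm (fun ⟨i, v, w⟩ hx => ?_) ?_)
  · by_contra hvw
    exact hdiag i v w hvw hx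
  · obtain ⟨⟨i, v, w⟩, hx⟩ := hC.1
    obtain rfl : v = w := by
      by_contra hvw
      exact hdiag i v w hvw hx
    rintro ⟨j, u, u'⟩ (rfl : u = u')
    exact hC.mem_of_reflTransGen hx (reflTransGen_tAdj_diag_of_gAdj (hconn ⟨i, v⟩ ⟨j, u⟩))

theorem Proj1Covering.exists_lift_target (hcov : Proj1Covering s t B Vmap C)
    (hC : IsComponent s t B Vmap C) {a : A} {v w : B (s a)} {v' : B (t a)}
    (hm : (⟨s a, (v, w)⟩ : TVert B) ∈ C) (hv : Vmap a v = some v') :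
    ∃ w', Vmap a w = some w' ∧ (⟨t a, (v', w')⟩ : TVert B) ∈ C := by
  obtain ⟨w', hw', -⟩ := hcov.1 a v w v' hm hv
  exact ⟨w', hw', hC.2.1 _ hm _ ⟨a, v, w, v', w', hv, hw', Or.inl ⟨rfl, rfl⟩⟩⟩

theorem Proj1Covering.exists_lift_source (hcov : Proj1Covering s t B Vmap C)
    (hC : IsComponent s t B Vmap C) {a : A} {v' w' : B (t a)} {v : B (s a)}
    (hm : (⟨t a, (v', w')⟩ : TVert B) ∈ C) (hv : Vmap a v = some v') :
    ∃ w, Vmap a w = some w' ∧ (⟨s a, (v, w)⟩ : TVert B) ∈ C := by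
  obtain ⟨w, hw, -⟩ := hcov.2 a v' w' v hm hv
  exact ⟨w, hw, hC.2.1 _ hm _ ⟨a, v, w, v', w', hv, hw, Or.inr ⟨rfl, rfl⟩⟩⟩

theorem Proj2Covering.exists_lift_source (hcov : Proj2Covering s t B Vmap C)
    (hC : IsComponent s t B Vmap C) {a : A} {v' w' : B (t a)} {w : B (s a)}
    (hm : (⟨t a, (v', w')⟩ : TVert B) ∈ C) (hw : Vmap a w = some w') :
    ∃ v, Vmap a v = some v' ∧ (⟨s a, (v, w)⟩ : TVert B) ∈ C := by
  obtain ⟨v, hv, -⟩ := hcov.2 a v' w' w hm hw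
  exact ⟨v, hv, hC.2.1 _ hm _ ⟨a, v, w, v', w', hv, hw, Or.inr ⟨rfl, rfl⟩⟩⟩

variable [∀ i, Fintype (B i)]

theorem card_mem_component_eq_of_map_eq_some
    (Vinj : ∀ (a : A) (v v' : B (s a)) (u : B (t a)),
      Vmap a v = some u → Vmap a v' = some u → v = v')
    (hC : IsComponent s t B Vmap C) (hcov : Proj1Covering s t B Vmap C)
    {a : A} {v : B (s a)} {v' : B (t a)} (hv : Vmap a v = some v') :
    #{w | (⟨s a, (v, w)⟩ : TVert B) ∈ C} = #{w' | (⟨t a, (v', w')⟩ : TVert B) ∈ C} := by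
  apply le_antisymm
  · refine card_le_card_of_forall_subsingleton (fun w w' => Vmap a w = some w')
      (fun w hw => ?_) (fun w' _ w₁ hw₁ w₂ hw₂ => Vinj a w₁ w₂ w' hw₁.2 hw₂.2)
    obtain ⟨w', hw', hm⟩ := hcov.exists_lift_target hC (mem_filter.mp hw).2 hv
    exact ⟨w', mem_filter.mpr ⟨mem_univ _, hm⟩, hw'⟩
  · refine card_le_card_of_forall_subsingleton' (fun w w' => Vmap a w = some w')
      (fun w' hw' => ?_)
      (fun w _ w₁ hw₁ w₂ hw₂ => Option.some.inj (hw₁.2.symm.trans hw₂.2))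
    obtain ⟨w, hw, hm⟩ := hcov.exists_lift_source hC (mem_filter.mp hw').2 hv
    exact ⟨w, mem_filter.mpr ⟨mem_univ _, hm⟩, hw⟩

theorem card_mem_component_eq_of_reflTransGen
    (Vinj : ∀ (a : A) (v v' : B (s a)) (u : B (t a)),
      Vmap a v = some u → Vmap a v' = some u → v = v')
    (hC : IsComponent s t B Vmap C) (hcov : Proj1Covering s t B Vmap C)
    {x y : GVert B} (h : Relation.ReflTransGen (GAdj s t B Vmap) x y) :
    #{w | (⟨x.1, (x.2, w)⟩ : TVert B) ∈ C} =
      #{w | (⟨y.1, (y.2, w)⟩ : TVert B) ∈ C} := by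
  induction h with
  | refl => rfl
  | tail _ hyz ih =>
    obtain ⟨a, v, w, hvw, ⟨rfl, rfl⟩ | ⟨rfl, rfl⟩⟩ := hyz
    · exact ih.trans (card_mem_component_eq_of_map_eq_some Vinj hC hcov hvw)
    · exact ih.trans (card_mem_component_eq_of_map_eq_some Vinj hC hcov hvw).symm

/-- `toLin'` of this matrix is the transpose of the paper's `b^C`; it is again a morphism. -/
noncomputable def componentMatrix (C : Set (TVert B)) (i : ι) : Matrix (B i) (B i) ℂ :=
  Matrix.ofRel ℂ fun v w => (⟨i, (v, w)⟩ : TVert B) ∈ C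

theorem structC_eq_toLin' (a : A) :
    structC s t B Vmap a = (Matrix.ofRel ℂ fun w v => Vmap a v = some w).toLin' := by
  ext x w
  simp [structC, Matrix.ofRel, Matrix.mulVec, dotProduct]

theorem componentMatrix_comp_structC
    (Vinj : ∀ (a : A) (v v' : B (s a)) (u : B (t a)),
      Vmap a v = some u → Vmap a v' = some u → v = v')
    (hC : IsComponent s t B Vmap C) (hcov₁ : Proj1Covering s t B Vmap C)
    (hcov₂ : Proj2Covering s t B Vmap C) (a : A) :
    (componentMatrix C (t a)).toLin'.comp (structC s t B Vmap a) =
      (structC s t B Vmap a).comp (componentMatrix C (s a)).toLin' := by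
  rw [structC_eq_toLin', componentMatrix, componentMatrix, ← Matrix.toLin'_mul,
    ← Matrix.toLin'_mul]
  congr 1
  ext v' w
  rw [Matrix.ofRel_mul_ofRel_apply, Matrix.ofRel_mul_ofRel_apply, Nat.cast_inj]
  refine card_eq_card_of_card_le_one (card_le_one.mpr fun w₁ hw₁ w₂ hw₂ => ?_)
    (card_le_one.mpr fun v₁ hv₁ v₂ hv₂ => ?_) ?_
  · simp only [mem_filter, mem_univ, true_and] at hw₁ hw₂
    exact Option.some.inj (hw₁.2.symm.trans hw₂.2)
  · simp only [mem_filter, mem_univ, true_and] at hv₁ hv₂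
    exact Vinj a v₁ v₂ v' hv₁.1 hv₂.1
  · simp only [filter_nonempty_iff, mem_univ, true_and]
    constructor
    · rintro ⟨w', hm, hw'⟩
      exact hcov₂.exists_lift_source hC hm hw'
    · rintro ⟨v, hv, hm⟩
      obtain ⟨w', hw', hm'⟩ := hcov₁.exists_lift_target hC hm hv
      exact ⟨w', hm', hw'⟩

end CoveringComponent

section

variable {ι A : Type} (s t : A → ι) (B : ι → Type)
  (Vmap : ∀ a : A, B (s a) → Option (B (t a)))

variable [∀ i, Fintype (B i)]

theorem complexification_decomposable_of_extra_covering_component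
    (Vinj : ∀ (a : A) (v v' : B (s a)) (u : B (t a)),
      Vmap a v = some u → Vmap a v' = some u → v = v')
    (hconn : ∀ x y : GVert B, Relation.ReflTransGen (GAdj s t B Vmap) x y)
    (C : Set (TVert B)) (hC : IsComponent s t B Vmap C)
    (hcov : Proj1Covering s t B Vmap C ∧ Proj2Covering s t B Vmap C)
    (hne : C ≠ {x : TVert B | x.2.1 = x.2.2}) :
    ∃ U₁ U₂ : ∀ i : ι, Submodule ℂ (B i → ℂ),
      (∀ (a : A) (x : B (s a) → ℂ), x ∈ U₁ (s a) → structC s t B Vmap a x ∈ U₁ (t a)) ∧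
      (∀ (a : A) (x : B (s a) → ℂ), x ∈ U₂ (s a) → structC s t B Vmap a x ∈ U₂ (t a)) ∧
      (∃ i, U₁ i ≠ ⊥) ∧ (∃ i, U₂ i ≠ ⊥) ∧
      (∀ i, IsCompl (U₁ i) (U₂ i)) := by
  obtain ⟨i₀, v₀, w₀, hvw, hC₀⟩ := hC.exists_ne_mem hconn hne
  set d := #{w | (⟨i₀, (v₀, w)⟩ : TVert B) ∈ C}
  have hreg : ∀ i (v : B i), #{w | (⟨i, (v, w)⟩ : TVert B) ∈ C} = d := fun i v =>
    (card_mem_component_eq_of_reflTransGen Vinj hC hcov.1 (hconn ⟨i₀, v₀⟩ ⟨i, v⟩)).symm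
  let g i := (componentMatrix C i).toLin' - (d : ℂ) • 1
  have hg a : (g (t a)).comp (structC s t B Vmap a) = (structC s t B Vmap a).comp (g (s a)) := by
    simp only [g, LinearMap.sub_comp, LinearMap.comp_sub, LinearMap.smul_comp,
      LinearMap.comp_smul, Module.End.one_eq_id, LinearMap.id_comp, LinearMap.comp_id,
      componentMatrix_comp_structC Vinj hC hcov.1 hcov.2]
  refine ⟨fun i => ⨆ n, LinearMap.ker (g i ^ n), fun i => ⨅ n, LinearMap.range (g i ^ n),
    fun a _ hx => LinearMap.iSup_ker_pow_le_comap_of_comp_eq (hg a) hx,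
    fun a _ hx => LinearMap.iInf_range_pow_le_comap_of_comp_eq (hg a) hx, ⟨i₀, ?_⟩,
    ⟨i₀, iInf_range_pow_toLin'_ofRel_sub_ne_bot (hreg i₀) hC₀ hvw⟩,
    fun i => LinearMap.isCompl_iSup_ker_pow_iInf_range_pow (g i)⟩
  refine (Submodule.ne_bot_iff _).mpr ⟨1, Submodule.mem_iSup_of_mem 1 ?_, fun h => ?_⟩
  · rw [pow_one]
    exact one_mem_ker_toLin'_ofRel_sub (hreg i₀)
  · exact one_ne_zero (congrFun h v₀)

end
end

section
/- Let V be an F1-representation of a quiver Q. Suppose there exists a string E in the coefficient quiver Γ_V with s(E) ≠ t(E), and a string D from t(E) to s(E) such that the image of D under the winding c_V equals the s-fold composition c_V(E)^s of the image of E for some s ≥ 1. Then V does not have finite nice length: no finite nice sequence of gradings of V distinguishes all vertices of Γ_V. -/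
/-!
Let `v₀, …, v_m` be the vertices along `E` and `w₀ = v_m, …, w_{σm} = v₀` those along `D`. By
induction on the index `k`, every grading `∂_k` of a nice sequence satisfies
`∂_k(w_i) = ∂_k(v_{i mod m})` and `∂_k(v₀) = ∂_k(v_m)`. Indeed, if this holds for all earlier
gradings, niceness gives `∂_k` the same increment along the `i`-th letter of `D` as along the
`(i mod m)`-th letter of `E`; so walking along `D` changes `∂_k` by `σ (∂_k(v_m) - ∂_k(v₀))`,
whereas it has to change it by `∂_k(v₀) - ∂_k(v_m)`. Hence `(σ + 1)(∂_k(v₀) - ∂_k(v_m)) = 0`,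
and no grading separates `s(E) = v₀` from `t(E) = v_m`.
-/

section

/- `Q` is a quiver with vertices `ι`, arrows `A` and source/target maps `s,t`;
`V` is an `F1`-representation of `Q`, encoded by the families `B i` of nonzero
elements and the `Option`-valued structure maps `Vmap` (`none` standing for
the zero element), injective away from `none`. -/
variable {ι A : Type} (s t : A → ι) (B : ι → Type)
  (Vmap : ∀ a : A, B (s a) → Option (B (t a)))

/-- Arrows of the coefficient quiver `Γ_V`: an arrow `v → w` labelled `a`
whenever `V_a v = w ≠ 0`. -/
def GArr : Type :=
  Σ a : A, {p : B (s a) × B (t a) // Vmap a p.1 = some p.2}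

/-- Source of an arrow of `Γ_V`. -/
def gsrc (e : GArr s t B Vmap) : GVert B := ⟨s e.1, e.2.1.1⟩

/-- Target of an arrow of `Γ_V`. -/
def gtgt (e : GArr s t B Vmap) : GVert B := ⟨t e.1, e.2.1.2⟩

/-- A letter of a string: an arrow `a` (direct letter, `true`) or its formal
inverse `a⁻` (`false`). -/
def Letter : Type := GArr s t B Vmap × Bool

/-- Source of a letter: `s(a) = s a` for a direct letter, `s(a⁻) = t a`. -/
def lsrc (x : Letter s t B Vmap) : GVert B :=
  if x.2 then gsrc s t B Vmap x.1 else gtgt s t B Vmap x.1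

/-- Target of a letter: `t(a) = t a` for a direct letter, `t(a⁻) = s a`. -/
def ltgt (x : Letter s t B Vmap) : GVert B :=
  if x.2 then gtgt s t B Vmap x.1 else gsrc s t B Vmap x.1

/-- The image of a letter under the winding `c_V`: the label of the arrow in
`Q` together with the direction. -/
def clabel (x : Letter s t B Vmap) : A × Bool := (x.1.1, x.2)

theorem List.getElem?_flatten_replicate {α : Type*} (l : List α) (σ : ℕ) {i : ℕ}
    (hi : i < σ * l.length) : (List.replicate σ l).flatten[i]? = l[i % l.length]? := by
  induction σ generalizing i with
  | zero => simp at hi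
  | succ σ ih =>
    rw [List.replicate_succ, List.flatten_cons]
    rcases lt_or_ge i l.length with h | h
    · rw [List.getElem?_append_left h, Nat.mod_eq_of_lt h]
    · rw [List.getElem?_append_right h, ih (by rw [Nat.succ_mul] at hi; omega),
        ← Nat.mod_eq_sub_mod h]

theorem List.apply_getElem_of_map_eq_flatten_replicate {α β : Type*} {f : α → β}
    {D E : List α} {σ : ℕ} (h : D.map f = (List.replicate σ (E.map f)).flatten)
    (hE : 0 < E.length) {i : ℕ} (hi : i < D.length) :
    f D[i] = f (E[i % E.length]'(Nat.mod_lt _ hE)) := by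
  have hlen : D.length = σ * E.length := by simpa using congrArg List.length h
  have := congrArg (·[i]?) h
  rw [List.getElem?_flatten_replicate _ _ (by simpa [← hlen] using hi)] at this
  simpa [List.getElem?_eq_getElem hi, List.getElem?_eq_getElem (Nat.mod_lt i hE)] using this

theorem List.IsChain.exists_vertices {α V : Type*} {src tgt : α → V} {L : List α}
    (hL : L.IsChain (fun x y => tgt x = src y)) (hne : L ≠ []) :
    ∃ v : ℕ → V, v 0 = src (L.head hne) ∧ v L.length = tgt (L.getLast hne) ∧
      ∀ i (hi : i < L.length), src L[i] = v i ∧ tgt L[i] = v (i + 1) := by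
  refine ⟨fun i => if hi : i < L.length then src L[i] else tgt (L.getLast hne),
    by simp [List.head_eq_getElem, List.length_pos_iff.mpr hne], by simp,
    fun i hi => ⟨by simp [hi], ?_⟩⟩
  rcases (show i + 1 ≤ L.length from hi).lt_or_eq with h | h
  · simpa [h] using List.isChain_iff_getElem.mp hL i h
  · simp [List.getLast_eq_getElem, ← h]

/-- The path `f` on `[0, m]` continued beyond `m` by repeating its increments, so that each lap
shifts the values by `f m - f 0`. -/
def unwind (f : ℕ → ℤ) (m i : ℕ) : ℤ := f (i % m) - (i / m : ℕ) * (f 0 - f m)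

theorem unwind_succ_sub (f : ℕ → ℤ) {m : ℕ} (hm : 0 < m) (i : ℕ) :
    unwind f m (i + 1) - unwind f m i = f (i % m + 1) - f (i % m) := by
  rcases (show i % m + 1 ≤ m from Nat.mod_lt i hm).lt_or_eq with h | h
  · have hmod : (i + 1) % m = i % m + 1 := by rw [← Nat.mod_add_mod, Nat.mod_eq_of_lt h]
    have hdiv : (i + 1) / m = i / m :=
      Nat.succ_div_of_not_dvd (by rw [Nat.dvd_iff_mod_eq_zero, hmod]; omega)
    simp only [unwind, hmod, hdiv]
    ring
  · have hmod : (i + 1) % m = 0 := by rw [← Nat.mod_add_mod, h, Nat.mod_self]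
    have hdiv : (i + 1) / m = i / m + 1 :=
      Nat.succ_div_of_dvd (Nat.dvd_of_mod_eq_zero hmod)
    simp only [unwind, hmod, hdiv, h]
    push_cast
    ring

theorem apply_succ_mod_of_apply_zero_eq {f : ℕ → ℤ} {m : ℕ} (hm : 0 < m) (hf : f 0 = f m)
    (i : ℕ) : f ((i + 1) % m) = f (i % m + 1) := by
  have := unwind_succ_sub f hm i
  simp only [unwind, hf, sub_self, mul_zero, sub_zero] at this
  linarith

theorem sub_eq_sub_zero_of_succ_sub_eq {g F : ℕ → ℤ} {N : ℕ}
    (h : ∀ i < N, g (i + 1) - g i = F (i + 1) - F i) : ∀ i ≤ N, g i - F i = g 0 - F 0 := by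
  intro i hi
  induction i with
  | zero => rfl
  | succ i ih => linarith [h i hi, ih (by omega)]

theorem apply_zero_eq_of_winding {f g : ℕ → ℤ} {m σ : ℕ} (hm : 0 < m)
    (hstep : ∀ i < σ * m, g (i + 1) - g i = f (i % m + 1) - f (i % m))
    (h0 : g 0 = f m) (hend : g (σ * m) = f 0) :
    f 0 = f m ∧ ∀ i ≤ σ * m, g i = f (i % m) := by
  have hconst : ∀ i ≤ σ * m, g i - unwind f m i = g 0 - unwind f m 0 :=
    sub_eq_sub_zero_of_succ_sub_eq fun i hi => by rw [hstep i hi, unwind_succ_sub f hm]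
  have hloop := hconst (σ * m) le_rfl
  simp only [unwind, Nat.mul_mod_left, Nat.mul_div_cancel _ hm, Nat.zero_mod, Nat.zero_div,
    hend, h0] at hloop
  have hδ : f 0 = f m := by
    have : ((σ : ℤ) + 1) * (f 0 - f m) = 0 := by push_cast at hloop; linarith
    linarith [(mul_eq_zero.mp this).resolve_left (by positivity)]
  refine ⟨hδ, fun i hi => ?_⟩
  have := hconst i hi
  simp only [unwind, hδ, h0, sub_self, mul_zero, sub_zero, Nat.zero_mod] at this
  linarith

theorem grading_eq_of_winding {κ V : Type*} [LT κ] [WellFoundedLT κ] (grad : κ → V → ℤ)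
    {v w : ℕ → V} {m σ : ℕ} (hm : 0 < m)
    (hstep : ∀ k, ∀ i < σ * m,
      (∀ j < k, grad j (w i) = grad j (v (i % m)) ∧
        grad j (w (i + 1)) = grad j (v (i % m + 1))) →
        grad k (w (i + 1)) - grad k (w i) = grad k (v (i % m + 1)) - grad k (v (i % m)))
    (h0 : w 0 = v m) (hend : w (σ * m) = v 0) (k : κ) :
    grad k (v 0) = grad k (v m) ∧ ∀ i ≤ σ * m, grad k (w i) = grad k (v (i % m)) := by
  induction k using WellFoundedLT.induction with
  | _ k ih =>
  refine apply_zero_eq_of_winding (f := fun i => grad k (v i)) (g := fun i => grad k (w i)) hm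
    (fun i hi => hstep k i hi fun j hj => ?_) (by rw [h0]) (by rw [hend])
  obtain ⟨hj0, hjw⟩ := ih j hj
  exact ⟨hjw i hi.le, (hjw (i + 1) hi).trans
    (apply_succ_mod_of_apply_zero_eq (f := fun i => grad j (v i)) hm hj0 i)⟩

def IsNiceFamily {κ : Type*} [LT κ] (grad : κ → GVert B → ℤ) : Prop :=
  ∀ k : κ, ∀ a b : GArr s t B Vmap, a.1 = b.1 →
    (∀ j : κ, j < k →
      grad j (gsrc s t B Vmap a) = grad j (gsrc s t B Vmap b) ∧
      grad j (gtgt s t B Vmap a) = grad j (gtgt s t B Vmap b)) →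
    grad k (gsrc s t B Vmap a) - grad k (gtgt s t B Vmap a) =
      grad k (gsrc s t B Vmap b) - grad k (gtgt s t B Vmap b)

theorem IsNiceFamily.sub_eq_of_clabel_eq {κ : Type*} [LT κ] {grad : κ → GVert B → ℤ}
    (hnice : IsNiceFamily s t B Vmap grad) {k : κ} {x y : Letter s t B Vmap}
    (hxy : clabel s t B Vmap x = clabel s t B Vmap y)
    (hprev : ∀ j < k, grad j (lsrc s t B Vmap x) = grad j (lsrc s t B Vmap y) ∧
      grad j (ltgt s t B Vmap x) = grad j (ltgt s t B Vmap y)) :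
    grad k (ltgt s t B Vmap x) - grad k (lsrc s t B Vmap x) =
      grad k (ltgt s t B Vmap y) - grad k (lsrc s t B Vmap y) := by
  obtain ⟨a, dir⟩ := x
  obtain ⟨b, dir'⟩ := y
  obtain ⟨hab, rfl⟩ := Prod.mk.inj hxy
  cases dir
  · simpa [lsrc, ltgt] using hnice k a b hab fun j hj => (hprev j hj).symm
  · have := hnice k a b hab hprev
    simp only [lsrc, ltgt, if_true] at this ⊢
    linarith

/-- Strings are encoded as nonempty lists of letters, written left to right (`a_1 ⋯ a_n`, so
`s(E)` is the source of the head and `t(E)` the target of the last letter). -/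
theorem not_finite_nice_length
    (E D : List (Letter s t B Vmap))
    (hEne : E ≠ []) (hDne : D ≠ [])
    (hEstr : List.Chain' (fun x y => ltgt s t B Vmap x = lsrc s t B Vmap y) E)
    (hDstr : List.Chain' (fun x y => ltgt s t B Vmap x = lsrc s t B Vmap y) D)
    -- `E` is not a cycle
    (hnc : lsrc s t B Vmap (E.head hEne) ≠ ltgt s t B Vmap (E.getLast hEne))
    -- `D` completes `E` to a cycle: `D` goes from `t(E)` to `s(E)`
    (hDs : lsrc s t B Vmap (D.head hDne) = ltgt s t B Vmap (E.getLast hEne))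
    (hDt : ltgt s t B Vmap (D.getLast hDne) = lsrc s t B Vmap (E.head hEne))
    -- `c_V(D) = c_V(E)^σ` with `σ ≥ 1`
    (σ : ℕ)
    (himg : D.map (clabel s t B Vmap) =
      (List.replicate σ (E.map (clabel s t B Vmap))).flatten) :
    ¬ ∃ (n : ℕ) (grad : Fin (n + 1) → GVert B → ℤ),
      -- the sequence of gradings is nice
      (∀ k : Fin (n + 1), ∀ a b : GArr s t B Vmap, a.1 = b.1 →
        (∀ j : Fin (n + 1), j < k →
          grad j (gsrc s t B Vmap a) = grad j (gsrc s t B Vmap b) ∧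
          grad j (gtgt s t B Vmap a) = grad j (gtgt s t B Vmap b)) →
        grad k (gsrc s t B Vmap a) - grad k (gtgt s t B Vmap a) =
          grad k (gsrc s t B Vmap b) - grad k (gtgt s t B Vmap b)) ∧
      -- and it distinguishes the vertices of `Γ_V`
      (∀ x y : GVert B, x ≠ y → ∃ k : Fin (n + 1), grad k x ≠ grad k y) := by
  rintro ⟨n, grad, hnice, hsep⟩
  have hm : 0 < E.length := List.length_pos_iff.mpr hEne
  have hlen : D.length = σ * E.length := by simpa using congrArg List.length himg
  obtain ⟨v, hv0, hvm, hvE⟩ := hEstr.exists_vertices hEne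
  obtain ⟨w, hw0, hwN, hwD⟩ := hDstr.exists_vertices hDne
  have hagree := grading_eq_of_winding grad (v := v) (w := w) (σ := σ) hm
    (fun k i hi hprev => by
      rw [← hlen] at hi
      obtain ⟨hsD, htD⟩ := hwD i hi
      obtain ⟨hsE, htE⟩ := hvE (i % E.length) (Nat.mod_lt i hm)
      rw [← hsD, ← htD, ← hsE, ← htE] at hprev ⊢
      exact IsNiceFamily.sub_eq_of_clabel_eq s t B Vmap hnice
        (List.apply_getElem_of_map_eq_flatten_replicate himg hm hi) hprev)
    (by rw [hw0, hDs, hvm]) (by rw [← hlen, hwN, hDt, hv0])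
  obtain ⟨k, hk⟩ := hsep _ _ hnc
  exact hk (by rw [← hv0, ← hvm]; exact (hagree k).1)

end
end
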